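/- GreedyAllocationSubmodular is (1+α)-competitive for fractional matroid online bipartite vertex cover: let G = (L,R,E) be a finite bipartite graph whose right vertices arrive in the order v_1, …, v_m, let f be a nonnegative monotone submodular set function on subsets of L, and let y : L → [0,1] and z : R → [0,1] be produced by GreedyAllocationSubmodular. Then y_u + z_v ≥ 1 for every edge (u,v) ∈ E, and f̂(y) + ∑_{v∈R} z_v ≤ (1+α)·(f(C∩L) + |C∩R|) for every vertex cover C of G. -/

import Mathlib

open Finset

/-- The constant `α = 1/(e-1)`, so that `1 + α = 1/(1 - 1/e)`. -/
noncomputable def alpha : ℝ := 1 / (Real.exp 1 - 1)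

/-- The Lovász extension of a set function `f` on subsets of a finite type `L`:
`f̂(y) = ∫₀¹ f({u : y u ≥ t}) dt`. -/
noncomputable def lovasz {L : Type*} [Fintype L] (f : Finset L → ℝ) (y : L → ℝ) : ℝ :=
  ∫ t in (0:ℝ)..1, f (Finset.univ.filter fun u => t ≤ y u)

/-- `(CL, CR)` is a vertex cover of the bipartite graph with edge set `E ⊆ L × R`. -/
def IsVertexCover {L R : Type*} (E : Finset (L × R)) (CL : Finset L) (CR : Finset R) : Prop :=
  ∀ e ∈ E, e.1 ∈ CL ∨ e.2 ∈ CR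

/-!
Dual fitting with a potential. Fix a vertex cover `(CL, CR)` and let
`Ψ(y) = ∫₀¹ w(t) f(CL ∩ {y ≥ t}) dt` with `w(t) = (1 + α) / (t + α)`. Since `(1 + α) / α = e`,
`∫₀¹ w = 1 + α`, so `Ψ(0) = (1 + α) f(∅)` and `Ψ ≤ (1 + α) f(CL)`.

Raising `y` to level `a` on `N(v)` increases `f̂` by `∫₀ᵃ g` and `Ψ` by `∫₀ᵃ w h`, where `g(t)`
and `h(t)` are the marginal values of `N(v)` on `{y ≥ t}` and on `CL ∩ {y ≥ t}`. If `v ∈ CR`,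
the greedy step costs at most `1 + α` and `Ψ` does not decrease. Otherwise `N(v) ⊆ CL`, so
`g ≤ h` by submodularity; then either `a = 1` and the cost `∫₀¹ g` is at most `∫₀¹ w h`
because `w ≥ 1`, or the greedy constraint is tight, `∫₀ᵃ g = a + α`, and
`∫₀ᵃ w h ≥ w(a) (a + α) = 1 + α`. Summing over the steps and using `α f(∅) ≥ 0` gives the bound.
-/

open MeasureTheory intervalIntegral

theorem intervalIntegral_ite_le {G H : ℝ → ℝ} {b a c : ℝ} (hba : b ≤ a) (hac : a ≤ c)
    (hG : IntervalIntegrable G volume b a) (hH : IntervalIntegrable H volume a c) :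
    ∫ t in b..c, (if t ≤ a then G t else H t) = (∫ t in b..a, G t) + ∫ t in a..c, H t := by
  have hleft : Set.EqOn (fun t => if t ≤ a then G t else H t) G (Set.uIoc b a) := by
    intro t ht
    rw [Set.uIoc_of_le hba] at ht
    exact if_pos ht.2
  have hright : Set.EqOn (fun t => if t ≤ a then G t else H t) H (Set.uIoc a c) := by
    intro t ht
    rw [Set.uIoc_of_le hac] at ht
    exact if_neg (not_le.2 ht.1)
  rw [← integral_add_adjacent_intervals ((intervalIntegrable_congr hleft).2 hG)
    ((intervalIntegrable_congr hright).2 hH)]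
  congr 1
  · exact integral_congr_ae (Filter.Eventually.of_forall fun t ht => hleft ht)
  · exact integral_congr_ae (Filter.Eventually.of_forall fun t ht => hright ht)

theorem IsGreatest.apply_eq_of_continuousOn {F : ℝ → ℝ} {l b c a : ℝ}
    (ha : IsGreatest {x | x ∈ Set.Icc l b ∧ F x ≤ c} a) (hF : ContinuousOn F (Set.Icc l b))
    (hab : a < b) : F a = c := by
  refine le_antisymm ha.1.2 (not_lt.1 fun hlt => ?_)
  have hnhds : nhdsWithin a (Set.Ioc a b) ≤ nhdsWithin a (Set.Icc l b) :=
    nhdsWithin_mono _ fun x hx => ⟨ha.1.1.1.trans hx.1.le, hx.2⟩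
  have : (nhdsWithin a (Set.Ioc a b)).NeBot := by
    rw [nhdsWithin_Ioc_eq_nhdsGT hab]; infer_instance
  obtain ⟨x, hFx, hx⟩ := (((hF a ha.1.1).mono_left hnhds).eventually_lt_const hlt).and
    (eventually_mem_nhdsWithin) |>.exists
  exact not_le.2 hx.1 (ha.2 ⟨⟨ha.1.1.1.trans hx.1.le, hx.2⟩, hFx.le⟩)

theorem alpha_pos : 0 < alpha :=
  one_div_pos.2 (sub_pos.2 (Real.one_lt_exp_iff.2 one_pos))

noncomputable def weight (t : ℝ) : ℝ := (1 + alpha) / (t + alpha)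

theorem continuousOn_weight : ContinuousOn weight (Set.Icc 0 1) :=
  continuousOn_const.div (continuousOn_id.add continuousOn_const) fun t ht => by
    linarith [ht.1, alpha_pos]

theorem one_le_weight {t : ℝ} (ht : t ∈ Set.Icc (0:ℝ) 1) : 1 ≤ weight t := by
  rw [weight, le_div_iff₀ (by linarith [ht.1, alpha_pos])]
  linarith [ht.2]

theorem weight_nonneg {t : ℝ} (ht : t ∈ Set.Icc (0:ℝ) 1) : 0 ≤ weight t :=
  zero_le_one.trans (one_le_weight ht)

theorem weight_antitoneOn : AntitoneOn weight (Set.Icc 0 1) := fun s hs t _ hst => by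
  have := alpha_pos
  have : 0 < s + alpha := by linarith [hs.1]
  unfold weight
  gcongr

theorem weight_mul_add_alpha {a : ℝ} (ha : 0 ≤ a) : weight a * (a + alpha) = 1 + alpha :=
  div_mul_cancel₀ _ (by linarith [alpha_pos])

theorem integral_weight : ∫ t in (0:ℝ)..1, weight t = 1 + alpha := by
  have hα := alpha_pos
  have hratio : (1 + alpha) / alpha = Real.exp 1 := by
    have : Real.exp 1 - 1 ≠ 0 := (sub_pos.2 (Real.one_lt_exp_iff.2 one_pos)).ne'
    unfold alpha
    field_simp
    ring
  simp only [weight, div_eq_mul_inv, intervalIntegral.integral_const_mul]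
  rw [integral_comp_add_right (fun x => x⁻¹), integral_inv_of_pos (by linarith) (by linarith),
    zero_add, hratio, Real.log_exp, mul_one]

theorem one_sub_add_integral_le_integral_weight_mul {g h : ℝ → ℝ} {a : ℝ}
    (ha : a ∈ Set.Icc (0:ℝ) 1) (hg : IntervalIntegrable g volume 0 a)
    (hh : IntervalIntegrable h volume 0 a) (hg0 : ∀ t, 0 ≤ g t) (hgh : ∀ t, g t ≤ h t)
    (htight : a = 1 ∨ (1 - a) + ∫ t in (0:ℝ)..a, g t = 1 + alpha) :
    (1 - a) + ∫ t in (0:ℝ)..a, g t ≤ ∫ t in (0:ℝ)..a, weight t * h t := by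
  have hwh : IntervalIntegrable (fun t => weight t * h t) volume 0 a :=
    hh.continuousOn_mul (continuousOn_weight.mono (Set.uIcc_subset_Icc (by simp) ha))
  have hIcc : ∀ t ∈ Set.Icc 0 a, t ∈ Set.Icc (0:ℝ) 1 := fun t ht => ⟨ht.1, ht.2.trans ha.2⟩
  rcases htight with rfl | htight
  · rw [sub_self, zero_add]
    refine integral_mono_on zero_le_one hg hwh fun t ht => ?_
    nlinarith [hgh t, hg0 t, one_le_weight ht]
  · have hint : ∫ t in (0:ℝ)..a, g t = a + alpha := by linarith
    calc (1 - a) + ∫ t in (0:ℝ)..a, g t = weight a * ∫ t in (0:ℝ)..a, g t := by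
          rw [htight, hint, weight_mul_add_alpha ha.1]
      _ = ∫ t in (0:ℝ)..a, weight a * g t := (intervalIntegral.integral_const_mul _ _).symm
      _ ≤ ∫ t in (0:ℝ)..a, weight t * h t :=
          integral_mono_on ha.1 (hg.const_mul _) hwh fun t ht =>
            mul_le_mul (weight_antitoneOn (hIcc t ht) ha ht.2) (hgh t) (hg0 t)
              (weight_nonneg (hIcc t ht))

section LovaszExtension

variable {L : Type*}

/-- `raise P a y` is the paper's `y^{(a)}`, with the neighbourhood `N(v)` given by `P`. -/
noncomputable def raise (P : L → Prop) [DecidablePred P] (a : ℝ) (y : L → ℝ) : L → ℝ :=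
  fun u => if P u then max (y u) a else y u

theorem le_raise (P : L → Prop) [DecidablePred P] (a : ℝ) (y : L → ℝ) {u : L} (hu : P u) :
    a ≤ raise P a y u := by
  simp only [raise, if_pos hu, le_max_right]

theorem le_raise_self (P : L → Prop) [DecidablePred P] (a : ℝ) (y : L → ℝ) : y ≤ raise P a y :=
  fun u => by unfold raise; split_ifs <;> simp

def marginal [DecidableEq L] (φ : Finset L → ℝ) (N S : Finset L) : ℝ := φ (S ∪ N) - φ S

theorem marginal_nonneg [DecidableEq L] {φ : Finset L → ℝ} (hφ : Monotone φ) (N S : Finset L) :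
    0 ≤ marginal φ N S :=
  sub_nonneg.2 (hφ subset_union_left)

theorem monotone_comp_union [DecidableEq L] {φ : Finset L → ℝ} (hφ : Monotone φ)
    (N : Finset L) : Monotone fun S => φ (S ∪ N) :=
  fun _ _ h => hφ (union_subset_union h subset_rfl)

theorem monotone_comp_inter [DecidableEq L] {φ : Finset L → ℝ} (hφ : Monotone φ)
    (C : Finset L) : Monotone fun S => φ (S ∩ C) :=
  fun _ _ h => hφ (inter_subset_inter h subset_rfl)

theorem marginal_le_marginal_inter [DecidableEq L] {f : Finset L → ℝ}
    (hf_submod : ∀ A B : Finset L, f (A ∪ B) + f (A ∩ B) ≤ f A + f B) {N C : Finset L}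
    (hNC : N ⊆ C) (S : Finset L) : marginal f N S ≤ marginal (fun S => f (S ∩ C)) N S := by
  have h := hf_submod S ((S ∪ N) ∩ C)
  rw [show S ∪ (S ∪ N) ∩ C = S ∪ N by grind, show S ∩ ((S ∪ N) ∩ C) = S ∩ C by grind] at h
  simp only [marginal]
  linarith

variable [Fintype L]

noncomputable def upperLevel (y : L → ℝ) (t : ℝ) : Finset L := univ.filter fun u => t ≤ y u

@[simp]
theorem mem_upperLevel {y : L → ℝ} {t : ℝ} {u : L} : u ∈ upperLevel y t ↔ t ≤ y u := by
  simp [upperLevel]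

theorem upperLevel_antitone (y : L → ℝ) : Antitone (upperLevel y) := fun _ _ hst _ hu =>
  mem_upperLevel.2 (hst.trans (mem_upperLevel.1 hu))

theorem upperLevel_mono {y y' : L → ℝ} (h : y ≤ y') (t : ℝ) :
    upperLevel y t ⊆ upperLevel y' t := fun _ hu =>
  mem_upperLevel.2 ((mem_upperLevel.1 hu).trans (h _))

theorem upperLevel_zero {t : ℝ} (ht : 0 < t) : upperLevel (fun _ : L => (0:ℝ)) t = ∅ :=
  filter_false_of_mem fun _ _ => not_le.2 ht

theorem upperLevel_raise [DecidableEq L] (P : L → Prop) [DecidablePred P] (a : ℝ) (y : L → ℝ)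
    (t : ℝ) : upperLevel (raise P a y) t =
      if t ≤ a then upperLevel y t ∪ univ.filter P else upperLevel y t := by
  ext u
  by_cases hP : P u <;> split_ifs with hta <;> simp [raise, hP, hta]

theorem intervalIntegrable_mul_comp_upperLevel {w : ℝ → ℝ} {φ : Finset L → ℝ} (hφ : Monotone φ)
    (y : L → ℝ) {c d : ℝ} (hw : ContinuousOn w (Set.uIcc c d)) :
    IntervalIntegrable (fun t => w t * φ (upperLevel y t)) volume c d :=
  (hφ.comp_antitone (upperLevel_antitone y)).intervalIntegrable.continuousOn_mul hw

theorem intervalIntegrable_marginal_upperLevel [DecidableEq L] {φ : Finset L → ℝ}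
    (hφ : Monotone φ) (N : Finset L) (y : L → ℝ) (c d : ℝ) :
    IntervalIntegrable (fun t => marginal φ N (upperLevel y t)) volume c d :=
  ((monotone_comp_union hφ N).comp_antitone (upperLevel_antitone y)).intervalIntegrable.sub
    (hφ.comp_antitone (upperLevel_antitone y)).intervalIntegrable

noncomputable def weightedLovasz (w : ℝ → ℝ) (φ : Finset L → ℝ) (y : L → ℝ) : ℝ :=
  ∫ t in (0:ℝ)..1, w t * φ (upperLevel y t)

theorem lovasz_eq_weightedLovasz (f : Finset L → ℝ) (y : L → ℝ) :
    lovasz f y = weightedLovasz (fun _ => 1) f y := by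
  simp only [weightedLovasz, one_mul]
  rfl

theorem weightedLovasz_raise [DecidableEq L] {w : ℝ → ℝ} {φ : Finset L → ℝ} (hφ : Monotone φ)
    (hw : ContinuousOn w (Set.Icc 0 1)) (P : L → Prop) [DecidablePred P] (y : L → ℝ) {a : ℝ}
    (ha : a ∈ Set.Icc (0:ℝ) 1) :
    weightedLovasz w φ (raise P a y) = weightedLovasz w φ y +
      ∫ t in (0:ℝ)..a, w t * marginal φ (univ.filter P) (upperLevel y t) := by
  have hφP := monotone_comp_union hφ (univ.filter P)
  have hw' : ∀ {c d}, c ∈ Set.Icc (0:ℝ) 1 → d ∈ Set.Icc (0:ℝ) 1 → ContinuousOn w (Set.uIcc c d) :=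
    fun hc hd => hw.mono (Set.uIcc_subset_Icc hc hd)
  have h0 : (0:ℝ) ∈ Set.Icc (0:ℝ) 1 := Set.left_mem_Icc.2 zero_le_one
  have h1 : (1:ℝ) ∈ Set.Icc (0:ℝ) 1 := Set.right_mem_Icc.2 zero_le_one
  simp only [weightedLovasz, upperLevel_raise, apply_ite φ, mul_ite]
  rw [intervalIntegral_ite_le ha.1 ha.2
      (intervalIntegrable_mul_comp_upperLevel hφP y (hw' h0 ha))
      (intervalIntegrable_mul_comp_upperLevel hφ y (hw' ha h1)),
    ← integral_add_adjacent_intervals (intervalIntegrable_mul_comp_upperLevel hφ y (hw' h0 ha))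
      (intervalIntegrable_mul_comp_upperLevel hφ y (hw' ha h1))]
  simp only [marginal, mul_sub]
  rw [integral_sub (intervalIntegrable_mul_comp_upperLevel hφP y (hw' h0 ha))
      (intervalIntegrable_mul_comp_upperLevel hφ y (hw' h0 ha))]
  ring

theorem weightedLovasz_zero (w : ℝ → ℝ) (φ : Finset L → ℝ) :
    weightedLovasz w φ (fun _ => 0) = φ ∅ * ∫ t in (0:ℝ)..1, w t := by
  rw [weightedLovasz, ← intervalIntegral.integral_const_mul]
  refine integral_congr_ae (Filter.Eventually.of_forall fun t ht => ?_)
  rw [Set.uIoc_of_le zero_le_one] at ht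
  rw [upperLevel_zero ht.1, mul_comm]

theorem weightedLovasz_mono {w : ℝ → ℝ} {φ : Finset L → ℝ} (hφ : Monotone φ)
    (hw : ContinuousOn w (Set.Icc 0 1)) (hw0 : ∀ t ∈ Set.Icc (0:ℝ) 1, 0 ≤ w t) :
    Monotone (weightedLovasz (L := L) w φ) := fun y y' hyy' => by
  have hw' : ContinuousOn w (Set.uIcc 0 1) := by rwa [Set.uIcc_of_le zero_le_one]
  exact integral_mono_on zero_le_one (intervalIntegrable_mul_comp_upperLevel hφ y hw')
    (intervalIntegrable_mul_comp_upperLevel hφ y' hw') fun t ht =>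
      mul_le_mul_of_nonneg_left (hφ (upperLevel_mono hyy' t)) (hw0 t ht)

theorem weightedLovasz_le {w : ℝ → ℝ} {φ : Finset L → ℝ} {c : ℝ} (hφ : Monotone φ)
    (hw : ContinuousOn w (Set.Icc 0 1)) (hw0 : ∀ t ∈ Set.Icc (0:ℝ) 1, 0 ≤ w t)
    (hφc : ∀ S, φ S ≤ c) (y : L → ℝ) :
    weightedLovasz w φ y ≤ c * ∫ t in (0:ℝ)..1, w t := by
  have hw' : ContinuousOn w (Set.uIcc 0 1) := by rwa [Set.uIcc_of_le zero_le_one]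
  rw [← intervalIntegral.integral_const_mul]
  refine integral_mono_on zero_le_one (intervalIntegrable_mul_comp_upperLevel hφ y hw')
    ((hw'.intervalIntegrable).const_mul c) fun t ht => ?_
  rw [mul_comm c]
  exact mul_le_mul_of_nonneg_left (hφc _) (hw0 t ht)

theorem lovasz_zero (f : Finset L → ℝ) : lovasz f (fun _ => 0) = f ∅ := by
  rw [lovasz_eq_weightedLovasz, weightedLovasz_zero]
  simp

end LovaszExtension

section Greedy

variable {L : Type*} [Fintype L] [DecidableEq L] {f : Finset L → ℝ}

noncomputable def stepCost (f : Finset L → ℝ) (P : L → Prop) [DecidablePred P] (y : L → ℝ)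
    (b : ℝ) : ℝ :=
  (1 - b) + lovasz f (raise P b y) - lovasz f y

noncomputable def coverPotential (f : Finset L → ℝ) (C : Finset L) (y : L → ℝ) : ℝ :=
  weightedLovasz weight (fun S => f (S ∩ C)) y

theorem coverPotential_zero (f : Finset L → ℝ) (C : Finset L) :
    coverPotential f C (fun _ => 0) = (1 + alpha) * f ∅ := by
  rw [coverPotential, weightedLovasz_zero, integral_weight, empty_inter, mul_comm]

theorem coverPotential_le (hf : Monotone f) (C : Finset L) (y : L → ℝ) :
    coverPotential f C y ≤ (1 + alpha) * f C := by
  rw [mul_comm, ← integral_weight]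
  exact weightedLovasz_le (monotone_comp_inter hf C) continuousOn_weight
    (fun _ => weight_nonneg) (fun _ => hf inter_subset_right) y

theorem coverPotential_mono (hf : Monotone f) (C : Finset L) : Monotone (coverPotential f C) :=
  weightedLovasz_mono (monotone_comp_inter hf C) continuousOn_weight fun _ => weight_nonneg

theorem stepCost_eq (hf : Monotone f) (P : L → Prop) [DecidablePred P] (y : L → ℝ) {b : ℝ}
    (hb : b ∈ Set.Icc (0:ℝ) 1) :
    stepCost f P y b = (1 - b) + ∫ t in (0:ℝ)..b, marginal f (univ.filter P) (upperLevel y t) := by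
  have h := weightedLovasz_raise hf (continuousOn_const (c := (1:ℝ))) P y hb
  simp only [one_mul, ← lovasz_eq_weightedLovasz] at h
  rw [stepCost, h]
  ring

theorem continuousOn_stepCost (hf : Monotone f) (P : L → Prop) [DecidablePred P] (y : L → ℝ) :
    ContinuousOn (stepCost f P y) (Set.Icc 0 1) := by
  have hprim := continuousOn_primitive_interval'
    (intervalIntegrable_marginal_upperLevel hf (univ.filter P) y 0 1) Set.left_mem_uIcc
  rw [Set.uIcc_of_le zero_le_one] at hprim
  exact ((continuousOn_const.sub continuousOn_id).add hprim).congr fun b hb =>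
    stepCost_eq hf P y hb

theorem stepCost_le_of_isGreatest (hf : Monotone f)
    (hf_submod : ∀ A B : Finset L, f (A ∪ B) + f (A ∩ B) ≤ f A + f B)
    {P : L → Prop} [DecidablePred P] {y : L → ℝ} {C : Finset L} (hPC : univ.filter P ⊆ C)
    {a : ℝ} (ha : IsGreatest {b | b ∈ Set.Icc (0:ℝ) 1 ∧ stepCost f P y b ≤ 1 + alpha} a) :
    stepCost f P y a ≤ coverPotential f C (raise P a y) - coverPotential f C y := by
  have htight : a = 1 ∨ stepCost f P y a = 1 + alpha :=
    ha.1.1.2.eq_or_lt.imp id fun ha1 =>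
      ha.apply_eq_of_continuousOn (continuousOn_stepCost hf P y) ha1
  rw [stepCost_eq hf P y ha.1.1] at htight ⊢
  rw [coverPotential, coverPotential,
    weightedLovasz_raise (monotone_comp_inter hf C) continuousOn_weight P y ha.1.1,
    add_sub_cancel_left]
  exact one_sub_add_integral_le_integral_weight_mul ha.1.1
    (intervalIntegrable_marginal_upperLevel hf _ y 0 a)
    (intervalIntegrable_marginal_upperLevel (monotone_comp_inter hf C) _ y 0 a)
    (fun _ => marginal_nonneg hf _ _) (fun _ => marginal_le_marginal_inter hf_submod hPC _)
    htight

end Greedy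

theorem le_of_mem_of_forall_eq_raise {L : Type*} [DecidableEq L] {m : ℕ}
    {E : Finset (L × Fin m)} {Y : ℕ → L → ℝ} {A : Fin m → ℝ}
    (hY : ∀ i : Fin m, Y (i + 1) = raise (fun u => (u, i) ∈ E) (A i) (Y i))
    {u : L} {v : Fin m} (huv : (u, v) ∈ E) : A v ≤ Y m u := by
  have hmono : Monotone fun n => Y (min n m) := monotone_nat_of_le_succ fun n => by
    rcases lt_or_ge n m with hn | hn
    · rw [min_eq_left hn.le, min_eq_left hn, hY ⟨n, hn⟩]
      exact le_raise_self _ _ _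
    · rw [min_eq_right hn, min_eq_right (hn.trans n.le_succ)]
  calc A v ≤ Y (v + 1) u := by rw [hY v]; exact le_raise _ _ _ huv
    _ = Y (min (v + 1) m) u := by rw [min_eq_left v.isLt]
    _ ≤ Y (min m m) u := hmono v.isLt u
    _ = Y m u := by rw [min_self]

theorem sub_add_sum_le_sum_add_sub {m : ℕ} (Φ Ψ : ℕ → ℝ) (z c : Fin m → ℝ)
    (h : ∀ i : Fin m, Φ (i + 1) - Φ i + z i ≤ c i + (Ψ (i + 1) - Ψ i)) :
    Φ m - Φ 0 + ∑ i, z i ≤ ∑ i, c i + (Ψ m - Ψ 0) := by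
  have hsum := sum_le_sum fun i (_ : i ∈ univ) => h i
  rwa [sum_add_distrib, sum_add_distrib, Fin.sum_univ_eq_sum_range (fun n => Φ (n + 1) - Φ n),
    Fin.sum_univ_eq_sum_range (fun n => Ψ (n + 1) - Ψ n), sum_range_sub, sum_range_sub] at hsum

/-- The online vertices are `0, 1, …, m-1 : Fin m`, arriving in this order; `Y i` is the vector
`y` after the first `i` arrivals and `A i` is `a_i`. -/
theorem stmt14 {L : Type*} [Fintype L] [DecidableEq L] (m : ℕ)
    (E : Finset (L × Fin m)) (f : Finset L → ℝ)
    (hf_nonneg : ∀ S : Finset L, 0 ≤ f S)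
    (hf_mono : ∀ A B : Finset L, A ⊆ B → f A ≤ f B)
    (hf_submod : ∀ A B : Finset L, f (A ∪ B) + f (A ∩ B) ≤ f A + f B)
    (Y : ℕ → L → ℝ) (A : Fin m → ℝ) (z : Fin m → ℝ)
    (hY0 : Y 0 = fun _ => 0)
    (hA : ∀ i : Fin m,
      IsGreatest {a : ℝ | a ∈ Set.Icc (0:ℝ) 1 ∧
        (1 - a) + lovasz f (fun u => if (u, i) ∈ E then max (Y i u) a else Y i u)
          - lovasz f (Y i) ≤ 1 + alpha} (A i))
    (hYstep : ∀ i : Fin m, ∀ u : L,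
      Y ((i : ℕ) + 1) u = if (u, i) ∈ E then max (Y i u) (A i) else Y i u)
    (hz : ∀ i : Fin m, z i = 1 - A i) :
    (∀ e ∈ E, 1 ≤ Y m e.1 + z e.2) ∧
    ∀ CL : Finset L, ∀ CR : Finset (Fin m), IsVertexCover E CL CR →
      lovasz f (Y m) + ∑ v : Fin m, z v ≤ (1 + alpha) * (f CL + (CR.card : ℝ)) := by
  have hY : ∀ i : Fin m, Y (i + 1) = raise (fun u => (u, i) ∈ E) (A i) (Y i) :=
    fun i => funext (hYstep i)
  refine ⟨fun e he => ?_, fun CL CR hcov => ?_⟩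
  · linarith [le_of_mem_of_forall_eq_raise hY he, hz e.2]
  have hstep : ∀ i : Fin m, lovasz f (Y (i + 1)) - lovasz f (Y i) + z i ≤
      (if i ∈ CR then 1 + alpha else 0) +
        (coverPotential f CL (Y (i + 1)) - coverPotential f CL (Y i)) := by
    intro i
    have hcost : lovasz f (Y (i + 1)) - lovasz f (Y i) + z i =
        stepCost f (fun u => (u, i) ∈ E) (Y i) (A i) := by
      rw [hY i, hz i, stepCost]; ring
    rw [hcost, hY i]
    split_ifs with hi
    · have hfeas : stepCost f (fun u => (u, i) ∈ E) (Y i) (A i) ≤ 1 + alpha := (hA i).1.2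
      linarith [coverPotential_mono hf_mono CL (le_raise_self (fun u => (u, i) ∈ E) (A i) (Y i))]
    · have hPC : univ.filter (fun u => (u, i) ∈ E) ⊆ CL :=
        fun u hu => (hcov _ (mem_filter.1 hu).2).resolve_right hi
      linarith [stepCost_le_of_isGreatest hf_mono hf_submod hPC (hA i)]
  have htel := sub_add_sum_le_sum_add_sub (fun n => lovasz f (Y n))
    (fun n => coverPotential f CL (Y n)) z _ hstep
  simp only [sum_ite_mem, univ_inter, sum_const, nsmul_eq_mul, hY0, lovasz_zero,
    coverPotential_zero] at htel
  nlinarith [coverPotential_le hf_mono CL (Y m), hf_nonneg ∅, alpha_pos]
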